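/- Let p be a prime, G a group, and z ∈ G a central element of order p. Let m̂₁ ∈ G have order p and m̂₂ ∈ G have order p² with m̂₂^p ∈ ⟨z⟩; suppose their commutator lies in ⟨z⟩ and their images m₁, m₂ in G/⟨z⟩ generate a subgroup of order p². Then ⟨m̂₁, m̂₂⟩ is isomorphic either to ℤ/p²ℤ × ℤ/pℤ or to U_p. -/

import Mathlib

/-!
Modulo the central subgroup `⟨z⟩` the images of `m̂₁` and `m̂₂` are independent elements of order
`p`, so `m̂₂ ^ i * m̂₁ ^ j = 1` forces `p ∣ i` and `p ∣ j`, and then `p² ∣ i` because `m̂₂` has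
order `p²`. Conjugation by `m̂₁` multiplies `m̂₂` by the central commutator `z ^ c`. If `z ^ c = 1`
the two elements commute and generate `ℤ/p²ℤ × ℤ/pℤ`. Otherwise `z ^ c` generates
`⟨z⟩ = ⟨m̂₂ ^ p⟩`, so a power `w = m̂₁ ^ t` with `p ∤ t` satisfies `w m̂₂ w⁻¹ = m̂₂ ^ (1 + p)`;
then `w` and `m̂₂` still generate the same subgroup, and the evident map `U_p → G` onto it is
injective by the independence.
-/

lemma one_add_sq_zero_pow {R : Type*} [CommRing R] (x : R) (hx : x * x = 0) (n : ℕ) :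
    (1 + x) ^ n = 1 + (n : R) * x := by
  induction n with
  | zero => simp
  | succ n ih =>
      calc (1 + x) ^ (n + 1) = (1 + (n : R) * x) * (1 + x) := by rw [pow_succ, ih]
        _ = 1 + ((n : R) + 1) * x + (n : R) * (x * x) := by ring
        _ = 1 + (((n : ℕ) + 1 : ℕ) : R) * x := by rw [hx, mul_zero, add_zero]; push_cast; ring

/-- The unit `1 + p` of `ℤ/p²ℤ`. -/
def upUnit (p : ℕ) : (ZMod (p ^ 2))ˣ :=
  ZMod.unitOfCoprime (1 + p) ((Nat.coprime_add_self_left.mpr (Nat.coprime_one_left p)).pow_right 2)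

lemma upUnit_pow (p : ℕ) : upUnit p ^ p = 1 := by
  ext
  have hx : (p : ZMod (p ^ 2)) * p = 0 := by
    have h : ((p ^ 2 : ℕ) : ZMod (p ^ 2)) = 0 := ZMod.natCast_self _
    push_cast at h
    rw [← h]; ring
  rw [Units.val_pow_eq_pow_val, Units.val_one]
  rw [show ((upUnit p : ZMod (p ^ 2))) = ((1 + p : ℕ) : ZMod (p ^ 2)) from
    ZMod.coe_unitOfCoprime _ _]
  push_cast
  rw [one_add_sq_zero_pow _ hx p, hx, add_zero]

/-- Additive automorphisms of `M` as multiplicative automorphisms of `Multiplicative M`. -/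
def addAutToMulAut (M : Type*) [AddGroup M] : Multiplicative (AddAut M) →* MulAut (Multiplicative M) :=
  MonoidHom.mk' (fun f => AddEquiv.toMultiplicative f.toAdd) (fun _ _ => MulEquiv.ext fun _ => rfl)

/-- The action of `ℤ/pℤ` on `ℤ/p²ℤ` in which the generator `1` acts by multiplication
by `1 + p`. -/
def upAction (p : ℕ) : Multiplicative (ZMod p) →* MulAut (Multiplicative (ZMod (p ^ 2))) :=
  (addAutToMulAut (ZMod (p ^ 2))).comp
    ((AddAut.mulLeft).comp
      (AddMonoidHom.toMultiplicativeLeft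
        (ZMod.lift p ⟨zmultiplesHom (Additive (ZMod (p ^ 2))ˣ) (Additive.ofMul (upUnit p)),
          by
            simp only [zmultiplesHom_apply]
            rw [← ofMul_zpow]
            norm_cast
            rw [upUnit_pow p, ofMul_one]⟩)))

/-- `U_p = ℤ/p²ℤ ⋊ ℤ/pℤ`, a generator of `ℤ/pℤ` acting by multiplication by `1 + p`. -/
abbrev Up (p : ℕ) : Type _ :=
  (Multiplicative (ZMod (p ^ 2))) ⋊[upAction p] (Multiplicative (ZMod p))

/-- The cyclic subgroup generated by a central element is normal. -/
theorem zpowers_normal_of_mem_center {G : Type*} [Group G] {z : G}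
    (hz : z ∈ Subgroup.center G) : (Subgroup.zpowers z).Normal := by
  constructor
  intro n hn g
  obtain ⟨k, rfl⟩ := hn
  have hc : Commute g z := Subgroup.mem_center_iff.mp hz g
  refine ⟨k, ?_⟩
  rw [(hc.zpow_right k).eq, mul_inv_cancel_right]

open Subgroup

section ZModHom

variable {G : Type*} [Group G]

def zmodHom (n : ℕ) (g : G) (h : g ^ n = 1) : Multiplicative (ZMod n) →* G :=
  AddMonoidHom.toMultiplicativeLeft
    (ZMod.lift n ⟨zmultiplesHom (Additive G) (Additive.ofMul g), by simp [← ofMul_pow, h]⟩)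

variable {n : ℕ} {g : G} (h : g ^ n = 1)

lemma zmodHom_ofAdd_intCast (k : ℤ) :
    zmodHom n g h (Multiplicative.ofAdd (k : ZMod n)) = g ^ k := by
  simp [zmodHom, ZMod.lift_coe]

lemma zmodHom_ofAdd_natCast (k : ℕ) :
    zmodHom n g h (Multiplicative.ofAdd (k : ZMod n)) = g ^ k := by
  simpa using zmodHom_ofAdd_intCast h k

lemma zmodHom_ofAdd_one : zmodHom n g h (Multiplicative.ofAdd 1) = g := by
  simpa using zmodHom_ofAdd_natCast h 1

lemma zmodHom_apply [NeZero n] (x : Multiplicative (ZMod n)) :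
    zmodHom n g h x = g ^ (Multiplicative.toAdd x).val := by
  rw [← zmodHom_ofAdd_natCast h, ZMod.natCast_zmod_val, ofAdd_toAdd]

end ZModHom

lemma ofAdd_eq_one_of_dvd_val {n : ℕ} [NeZero n] {x : Multiplicative (ZMod n)}
    (h : n ∣ (Multiplicative.toAdd x).val) : x = 1 := by
  rw [← ofAdd_toAdd x, ← ZMod.natCast_zmod_val (Multiplicative.toAdd x),
    (ZMod.natCast_eq_zero_iff _ _).2 h, ofAdd_zero]

section Conj

variable {G : Type*} [Group G]

lemma conj_pow_eq_mul_pow {g a c : G} (hc : Commute g c) (h : g * a * g⁻¹ = a * c) (k : ℕ) :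
    g ^ k * a * (g ^ k)⁻¹ = a * c ^ k := by
  induction k with
  | zero => simp
  | succ k ih =>
    calc g ^ (k + 1) * a * (g ^ (k + 1))⁻¹ = g * (g ^ k * a * (g ^ k)⁻¹) * g⁻¹ := by group
      _ = g * a * g⁻¹ * (g * c ^ k * g⁻¹) := by rw [ih]; group
      _ = a * c ^ (k + 1) := by rw [h, (hc.pow_right k).eq, mul_inv_cancel_right, pow_succ']; group

lemma conj_pow_eq_pow_pow {b a : G} {u : ℕ} (h : b * a * b⁻¹ = a ^ u) (k : ℕ) :
    b ^ k * a * (b ^ k)⁻¹ = a ^ u ^ k := by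
  induction k with
  | zero => simp
  | succ k ih =>
    calc b ^ (k + 1) * a * (b ^ (k + 1))⁻¹ = b * (b ^ k * a * (b ^ k)⁻¹) * b⁻¹ := by group
      _ = (b * a * b⁻¹) ^ u ^ k := by rw [ih, conj_pow]
      _ = a ^ u ^ (k + 1) := by rw [h, ← pow_mul, pow_succ']

end Conj

section Independence

variable {G : Type*} [Group G] {p : ℕ} {x y : G}

lemma mem_of_pow_mem_of_not_dvd (hp : p.Prime) (hx : x ^ p = 1) {k : ℕ} (hk : ¬p ∣ k)
    {H : Subgroup G} (h : x ^ k ∈ H) : x ∈ H :=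
  zpowers_le.2 h <| mem_zpowers_pow_iff.2 <|
    Nat.Coprime.coprime_dvd_right (orderOf_dvd_of_pow_eq_one hx) (hp.coprime_iff_not_dvd.2 hk).symm

lemma closure_pair_pow_left (hp : p.Prime) (hx : x ^ p = 1) {t : ℕ} (ht : ¬p ∣ t) (y : G) :
    closure {x ^ t, y} = closure {x, y} := by
  refine le_antisymm ?_ ?_ <;> rw [closure_le, Set.insert_subset_iff, Set.singleton_subset_iff]
  · exact ⟨pow_mem (subset_closure (by simp)) t, subset_closure (by simp)⟩
  · exact ⟨mem_of_pow_mem_of_not_dvd hp hx ht (subset_closure (by simp)),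
      subset_closure (by simp)⟩

lemma notMem_zpowers_of_card_closure_pair (hp : 1 < p) (hx : x ^ p = 1)
    (hcard : Nat.card (closure {x, y}) = p ^ 2) : y ∉ zpowers x := by
  intro hy
  have hle : closure {x, y} ≤ zpowers x := by
    rw [closure_le, Set.insert_subset_iff, Set.singleton_subset_iff]
    exact ⟨mem_zpowers x, hy⟩
  have hdvd : p ^ 2 ∣ p := hcard ▸ (card_dvd_of_le hle).trans
    (Nat.card_zpowers x ▸ orderOf_dvd_of_pow_eq_one hx)
  have := Nat.le_of_dvd (by omega) hdvd
  nlinarith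

lemma dvd_and_dvd_of_pow_mul_pow_eq_one (hp : p.Prime) (hx : x ^ p = 1) (hy : y ^ p = 1)
    (hcard : Nat.card (closure {x, y}) = p ^ 2) {i j : ℕ} (h : x ^ i * y ^ j = 1) :
    p ∣ i ∧ p ∣ j := by
  have hyx := notMem_zpowers_of_card_closure_pair hp.one_lt hx hcard
  have hxy := notMem_zpowers_of_card_closure_pair hp.one_lt hy (Set.pair_comm x y ▸ hcard)
  have hj : p ∣ j := by
    by_contra hj
    refine hyx (mem_of_pow_mem_of_not_dvd hp hy hj ?_)
    rw [eq_inv_of_mul_eq_one_right h]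
    exact inv_mem (npow_mem_zpowers x i)
  refine ⟨by_contra fun hi => hxy (mem_of_pow_mem_of_not_dvd hp hx hi ?_), hj⟩
  obtain ⟨e, rfl⟩ := hj
  rw [pow_mul, hy, one_pow, mul_one] at h
  exact h ▸ one_mem _

lemma dvd_and_dvd_of_pow_mul_pow_pow_eq_one_of_map {Q : Type*} [Group Q] (f : G →* Q)
    (hp : p.Prime) {a b : G} (ha : f a ^ p = 1) (hb : b ^ p = 1)
    (hcard : Nat.card (closure {f b, f a}) = p ^ 2) {t : ℕ} (ht : ¬p ∣ t) {i j : ℕ}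
    (h : a ^ i * (b ^ t) ^ j = 1) : orderOf a ∣ i ∧ p ∣ j := by
  have hfb : f b ^ p = 1 := by rw [← map_pow, hb, map_one]
  have hfbt : f (b ^ t) ^ p = 1 := by rw [map_pow, pow_right_comm, hfb, one_pow]
  rw [← closure_pair_pow_left hp hfb ht, ← map_pow, Set.pair_comm] at hcard
  obtain ⟨-, e, rfl⟩ := dvd_and_dvd_of_pow_mul_pow_eq_one hp ha hfbt hcard
    (by simpa using congrArg f h)
  rw [← pow_mul, mul_left_comm, pow_mul, hb, one_pow, mul_one] at h
  exact ⟨orderOf_dvd_of_pow_eq_one h, dvd_mul_right p e⟩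

end Independence

section Semidirect

variable {G : Type*} [Group G] {a b : G}

theorem nonempty_closure_pair_mulEquiv_semidirectProduct {n m : ℕ} [NeZero n] [NeZero m]
    {φ : Multiplicative (ZMod m) →* MulAut (Multiplicative (ZMod n))}
    (ha : a ^ n = 1) (hb : b ^ m = 1)
    (hφ : ∀ g, (zmodHom n a ha).comp (φ g).toMonoidHom =
      (MulAut.conj (zmodHom m b hb g)).toMonoidHom.comp (zmodHom n a ha))
    (hind : ∀ i j : ℕ, a ^ i * b ^ j = 1 → n ∣ i ∧ m ∣ j) :
    Nonempty (closure ({b, a} : Set G) ≃*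
      Multiplicative (ZMod n) ⋊[φ] Multiplicative (ZMod m)) := by
  set ψ := SemidirectProduct.lift (zmodHom n a ha) (zmodHom m b hb) hφ
  have hψ (x) :
      ψ x = a ^ (Multiplicative.toAdd x.left).val * b ^ (Multiplicative.toAdd x.right).val := by
    simp [ψ, SemidirectProduct.lift, zmodHom_apply]
  have hinj : Function.Injective ψ := by
    refine (injective_iff_map_eq_one ψ).2 fun x hx => ?_
    obtain ⟨hi, hj⟩ := hind _ _ ((hψ x).symm.trans hx)
    exact SemidirectProduct.ext (ofAdd_eq_one_of_dvd_val hi) (ofAdd_eq_one_of_dvd_val hj)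
  have hrange : ψ.range = closure {b, a} := by
    refine le_antisymm ?_ ?_
    · rintro _ ⟨x, rfl⟩
      rw [hψ]
      exact mul_mem (pow_mem (subset_closure (by simp)) _) (pow_mem (subset_closure (by simp)) _)
    · rw [closure_le, Set.insert_subset_iff, Set.singleton_subset_iff]
      exact ⟨⟨SemidirectProduct.inr (Multiplicative.ofAdd 1), by simp [ψ, zmodHom_ofAdd_one]⟩,
        ⟨SemidirectProduct.inl (Multiplicative.ofAdd 1), by simp [ψ, zmodHom_ofAdd_one]⟩⟩
  exact ⟨((MonoidHom.ofInjective hinj).trans (MulEquiv.subgroupCongr hrange)).symm⟩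

theorem nonempty_closure_pair_mulEquiv_prod {n m : ℕ} [NeZero n] [NeZero m]
    (ha : a ^ n = 1) (hb : b ^ m = 1) (h : Commute a b)
    (hind : ∀ i j : ℕ, a ^ i * b ^ j = 1 → n ∣ i ∧ m ∣ j) :
    Nonempty (closure ({b, a} : Set G) ≃* Multiplicative (ZMod n) × Multiplicative (ZMod m)) := by
  refine (nonempty_closure_pair_mulEquiv_semidirectProduct (φ := 1) ha hb
    (fun g => MonoidHom.ext fun x => ?_) hind).map (·.trans SemidirectProduct.mulEquivProd)
  simp only [MonoidHom.comp_apply, MulEquiv.coe_toMonoidHom, MulAut.conj_apply, zmodHom_apply,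
    MonoidHom.one_apply, MulAut.one_apply]
  rw [← (h.pow_pow _ _).eq, mul_inv_cancel_right]

lemma upAction_ofAdd_natCast (p k : ℕ) (x : ZMod (p ^ 2)) :
    upAction p (Multiplicative.ofAdd (k : ZMod p)) (Multiplicative.ofAdd x) =
      Multiplicative.ofAdd ((1 + p : ZMod (p ^ 2)) ^ k * x) := by
  rw [← Int.cast_natCast]
  simp only [upAction, MonoidHom.comp_apply, AddMonoidHom.coe_toMultiplicativeLeft,
    Function.comp_apply, toAdd_ofAdd, ZMod.lift_coe, zmultiplesHom_apply, toMul_zsmul, toMul_ofMul,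
    zpow_natCast]
  change Multiplicative.ofAdd ((upUnit p ^ k) • x) = _
  rw [Units.smul_def, smul_eq_mul, Units.val_pow_eq_pow_val, upUnit, ZMod.coe_unitOfCoprime]
  push_cast
  rfl

theorem nonempty_closure_pair_mulEquiv_up {p : ℕ} [NeZero p] (ha : a ^ p ^ 2 = 1) (hb : b ^ p = 1)
    (h : b * a * b⁻¹ = a ^ (1 + p)) (hind : ∀ i j : ℕ, a ^ i * b ^ j = 1 → p ^ 2 ∣ i ∧ p ∣ j) :
    Nonempty (closure ({b, a} : Set G) ≃* Up p) := by
  refine nonempty_closure_pair_mulEquiv_semidirectProduct ha hb (fun g => ?_) hind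
  obtain ⟨k, rfl⟩ : ∃ k : ℕ, Multiplicative.ofAdd (k : ZMod p) = g :=
    ⟨(Multiplicative.toAdd g).val, by rw [ZMod.natCast_zmod_val, ofAdd_toAdd]⟩
  refine MonoidHom.ext fun x => ?_
  obtain ⟨i, rfl⟩ : ∃ i : ℕ, Multiplicative.ofAdd (i : ZMod (p ^ 2)) = x :=
    ⟨(Multiplicative.toAdd x).val, by rw [ZMod.natCast_zmod_val, ofAdd_toAdd]⟩
  have hcast : (1 + p : ZMod (p ^ 2)) ^ k * i = (((1 + p) ^ k * i : ℕ) : ZMod (p ^ 2)) := by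
    push_cast; rfl
  simp only [MonoidHom.comp_apply, MulEquiv.coe_toMonoidHom, MulAut.conj_apply,
    upAction_ofAdd_natCast, hcast, zmodHom_ofAdd_natCast]
  rw [← conj_pow, conj_pow_eq_pow_pow h, pow_mul]

end Semidirect

lemma exists_not_dvd_pow_eq_pow {G : Type*} [Group G] {p : ℕ} (hp : p.Prime) {z : G}
    (hz : orderOf z = p) {c d : ℕ} (hc : z ^ c ≠ 1) (hd : z ^ d ≠ 1) :
    ∃ t, ¬p ∣ t ∧ (z ^ c) ^ t = z ^ d := by
  have hzp : z ^ p = 1 := hz ▸ pow_orderOf_eq_one z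
  have hcp : ¬p ∣ c := fun ⟨e, he⟩ => hc (by rw [he, pow_mul, hzp, one_pow])
  have hmem : z ^ d ∈ zpowers (z ^ c) :=
    pow_mem (mem_of_pow_mem_of_not_dvd hp hzp hcp (mem_zpowers _)) d
  have hfin : IsOfFinOrder (z ^ c) := (orderOf_pos_iff.1 (hz ▸ hp.pos)).pow
  obtain ⟨t, ht : (z ^ c) ^ t = z ^ d⟩ := hfin.mem_powers_iff_mem_zpowers.2 hmem
  refine ⟨t, fun ⟨e, he⟩ => hd ?_, ht⟩
  rw [← ht, he, ← pow_mul, mul_comm, mul_assoc, pow_mul, hzp, one_pow]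

/-- Let `p` be a prime, `G` a group, `z ∈ G` central of order `p`.  Let
`m̂₁ ∈ G` have order `p` and `m̂₂ ∈ G` have order `p²` with `m̂₂^p ∈ ⟨z⟩`; suppose their
commutator lies in `⟨z⟩` and their images in `G/⟨z⟩` generate a subgroup of order `p²`.
Then `⟨m̂₁, m̂₂⟩` is isomorphic to `ℤ/p²ℤ × ℤ/pℤ` or to `U_p`. -/
theorem lift_of_order_p_and_order_p_squared_generate_ZpsqxZp_or_Up
    (p : ℕ) (hp : p.Prime) {G : Type*} [Group G] (z m1 m2 : G)
    (hz : z ∈ Subgroup.center G) (hzord : orderOf z = p)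
    (h1 : orderOf m1 = p) (h2 : orderOf m2 = p ^ 2)
    (h2p : m2 ^ p ∈ Subgroup.zpowers z)
    (hcomm : m1⁻¹ * m2⁻¹ * m1 * m2 ∈ Subgroup.zpowers z) :
    letI := zpowers_normal_of_mem_center hz
    Nat.card (Subgroup.closure
        {(QuotientGroup.mk m1 : G ⧸ Subgroup.zpowers z), QuotientGroup.mk m2}) = p ^ 2 →
    Nonempty (Subgroup.closure ({m1, m2} : Set G) ≃*
        (Multiplicative (ZMod (p ^ 2)) × Multiplicative (ZMod p))) ∨
    Nonempty (Subgroup.closure ({m1, m2} : Set G) ≃* Up p) := by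
  have := zpowers_normal_of_mem_center hz
  intro hQ
  have : NeZero p := ⟨hp.ne_zero⟩
  let π := QuotientGroup.mk' (zpowers z)
  have hm1 : m1 ^ p = 1 := h1 ▸ pow_orderOf_eq_one m1
  have hm2 : m2 ^ p ^ 2 = 1 := h2 ▸ pow_orderOf_eq_one m2
  have hzfin : IsOfFinOrder z := orderOf_pos_iff.1 (hzord ▸ hp.pos)
  obtain ⟨d, hd : z ^ d = m2 ^ p⟩ := hzfin.mem_powers_iff_mem_zpowers.2 h2p
  obtain ⟨c, hc : z ^ c = m1⁻¹ * m2⁻¹ * m1 * m2⟩ := hzfin.mem_powers_iff_mem_zpowers.2 hcomm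
  have hzc_central (g : G) : Commute g (z ^ c) := mem_center_iff.1 (pow_mem hz c) g
  have hconj : m1 * m2 * m1⁻¹ = m2 * z ^ c := by
    rw [← (hzc_central m1).mul_inv_cancel, hc]; group
  have hπm2 : π m2 ^ p = 1 := by rw [← map_pow]; exact (QuotientGroup.eq_one_iff _).2 h2p
  have hind (t : ℕ) (ht : ¬p ∣ t) (i j : ℕ) (h : m2 ^ i * (m1 ^ t) ^ j = 1) :
      p ^ 2 ∣ i ∧ p ∣ j :=
    h2 ▸ dvd_and_dvd_of_pow_mul_pow_pow_eq_one_of_map π hp hπm2 hm1 hQ ht h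
  by_cases hc1 : z ^ c = 1
  · left
    rw [hc1, mul_one, mul_inv_eq_iff_eq_mul] at hconj
    exact nonempty_closure_pair_mulEquiv_prod hm2 hm1 hconj.symm
      fun i j h => hind 1 hp.not_dvd_one i j (by rwa [pow_one])
  · right
    have hzd : z ^ d ≠ 1 := hd ▸ pow_ne_one_of_lt_orderOf hp.ne_zero (by nlinarith [hp.two_le])
    obtain ⟨t, ht, hzt⟩ := exists_not_dvd_pow_eq_pow hp hzord hc1 hzd
    have hw : m1 ^ t * m2 * (m1 ^ t)⁻¹ = m2 ^ (1 + p) := by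
      rw [conj_pow_eq_mul_pow (hzc_central m1) hconj, hzt, hd, add_comm, pow_succ']
    rw [← closure_pair_pow_left hp hm1 ht m2]
    exact nonempty_closure_pair_mulEquiv_up hm2 (by rw [pow_right_comm, hm1, one_pow]) hw
      (hind t ht)
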